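/- Monotonicity of odometers: fix a configuration η and an instruction sequence at each site. Let V ⊆ V' be finite subsets of ℤ^d, let α be a legal toppling sequence for η contained in V that stabilizes η in V, and let α' be a legal toppling sequence for η contained in V' that stabilizes η in V'. Then m_α(x) ≤ m_{α'}(x) for every x ∈ ℤ^d. In particular, writing m_V for the common odometer of stabilization in V, one has m_V ≤ m_{V'} pointwise, and for any nondecreasing sequence of finite sets V_n with ∪_n V_n = ℤ^d the limit m = lim_n m_{V_n} exists in (ℕ ∪ {∞})^{ℤ^d} and does not depend on the chosen exhaustion. -/

import Mathlib

open Filter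

/-! Definitions for the activated random walk toppling system on `ℤ^d`.

A configuration is a map `η : ℤ^d → ℕ ∪ {𝔰}`; we encode `ℕ ∪ {𝔰}` as `Option ℕ`,
where `some k` means `k` active particles at the site and `none` means a single
sleeping particle `𝔰`. -/

/-- Sites of the lattice `ℤ^d`. -/
abbrev Site (d : ℕ) := Fin d → ℤ

/-- A configuration: `some k` = `k` active particles, `none` = the sleeping state `𝔰`. -/
abbrev Config (d : ℕ) := Site d → Option ℕ

/-- An instruction: either `sleep`, or `jump` to the nearest neighbor in direction
`±e_j` (`s = true` for `+e_j`, `s = false` for `−e_j`). -/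
inductive Instr (d : ℕ) where
  | sleep : Instr d
  | jump (j : Fin d) (s : Bool) : Instr d
  deriving DecidableEq

/-- The nearest neighbor of `x` in direction `±e_j`. -/
def nbr {d : ℕ} (x : Site d) (j : Fin d) (s : Bool) : Site d :=
  x + (if s then (1 : ℤ) else -1) • Pi.single j 1

/-- A site is unstable when it holds at least one active particle. -/
def Unstable {d : ℕ} (η : Config d) (x : Site d) : Prop :=
  ∃ k : ℕ, η x = some (k + 1)

/-- Add one particle at `y`: an arriving particle wakes up a sleeping particle
(`𝔰` becomes `2`). -/
def addParticle {d : ℕ} (η : Config d) (y : Site d) : Config d :=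
  Function.update η y (match η y with
    | none => some 2
    | some m => some (m + 1))

/-- Apply a single instruction at the site `x`: a `sleep` instruction turns `1` into `𝔰`
and does nothing if there are at least `2` particles; a `jump` instruction moves one
active particle from `x` to the corresponding nearest neighbor. -/
def applyInstr {d : ℕ} (η : Config d) (x : Site d) : Instr d → Config d
  | Instr.sleep => if η x = some 1 then Function.update η x none else η
  | Instr.jump j s =>
      addParticle
        (Function.update η x (match η x with
          | some (k + 1) => some k
          | o => o))
        (nbr x j s)

/-- Perform the topplings of the finite sequence `α` (a list of sites), in order, using for
each site the first unused instruction of its instruction sequence `τ`; `cnt x` records how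
many instructions at `x` have already been used.  Returns the resulting configuration and
updated usage counts. -/
def toppleSeq {d : ℕ} (τ : Site d → ℕ → Instr d) :
    List (Site d) → Config d → (Site d → ℕ) → Config d × (Site d → ℕ)
  | [], η, cnt => (η, cnt)
  | x :: α, η, cnt =>
      toppleSeq τ α (applyInstr η x (τ x (cnt x))) (Function.update cnt x (cnt x + 1))

/-- The toppling sequence `α` is legal for `(η, cnt)`: each successively toppled site is
unstable at the moment of its toppling. -/
def LegalSeq {d : ℕ} (τ : Site d → ℕ → Instr d) :
    List (Site d) → Config d → (Site d → ℕ) → Prop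
  | [], _, _ => True
  | x :: α, η, cnt =>
      Unstable η x ∧
        LegalSeq τ α (applyInstr η x (τ x (cnt x))) (Function.update cnt x (cnt x + 1))

/-- `α` stabilizes `η` in `V`: after performing the topplings of `α` (starting from fresh
instruction counters), every site of `V` is stable. -/
def StabilizesIn {d : ℕ} (τ : Site d → ℕ → Instr d) (α : List (Site d)) (η : Config d)
    (V : Finset (Site d)) : Prop :=
  ∀ x ∈ V, ¬ Unstable (toppleSeq τ α η (fun _ => 0)).1 x

/-- `m_α(x)`: the number of occurrences of the site `x` in the toppling sequence `α`. -/
def mCount {d : ℕ} (α : List (Site d)) (x : Site d) : ℕ := α.count x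

/-! The abelian property of activated random walk: topplings at two distinct unstable sites
commute (an arriving particle turns `𝔰` into `2`, never into `1`, so a sleep instruction
cannot tell the two orders apart), and a site stays unstable until it is toppled itself.
Hence the first toppling of a currently unstable site `p` in a legal sequence `σ` can be
moved to the front of `σ`. If a legal sequence `β` starts at `p` and `σ` leaves `p` stable,
then `p` occurs in `σ`, so both sequences may be taken to start with `p`, and induction on
`β` gives `m_β ≤ m_σ` whenever `σ` leaves every site of `β` stable. For the limit, each
finite `A n` lies in some `Wseq m`, so `m_{A n} ≤ m_{B m}`, and symmetrically. -/

section
variable {d : ℕ}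

theorem nbr_ne_self (x : Site d) (j : Fin d) (s : Bool) : nbr x j s ≠ x := by
  intro h
  have hj := congrFun h j
  cases s <;> simp [nbr] at hj

def arrive : Option ℕ → Option ℕ
  | none => some 2
  | some m => some (m + 1)

def depart : Option ℕ → Option ℕ
  | some (k + 1) => some k
  | o => o

theorem applyInstr_sleep_apply (η : Config d) (x u : Site d) :
    applyInstr η x .sleep u = if u = x ∧ η x = some 1 then none else η u := by
  simp only [applyInstr]
  split_ifs <;> simp_all

theorem applyInstr_jump_apply (η : Config d) (x : Site d) (j : Fin d) (s : Bool) (u : Site d) :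
    applyInstr η x (.jump j s) u =
      if u = nbr x j s then arrive (η u) else if u = x then depart (η x) else η u := by
  have hne := nbr_ne_self x j s
  simp only [applyInstr, addParticle, Function.update_apply]
  split_ifs <;> subst_vars <;> rfl

theorem Unstable.applyInstr_of_ne {η : Config d} {x y : Site d} (hx : Unstable η x)
    (hyx : y ≠ x) (i : Instr d) : Unstable (applyInstr η y i) x := by
  obtain ⟨k, hk⟩ := hx
  cases i with
  | sleep => exact ⟨k, by simp [applyInstr_sleep_apply, hyx.symm, hk]⟩
  | jump j s =>
    by_cases h : x = nbr y j s
    · subst h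
      exact ⟨k + 1, by simp [applyInstr_jump_apply, hk, arrive]⟩
    · exact ⟨k, by simp [applyInstr_jump_apply, h, hyx.symm, hk]⟩

theorem applyInstr_comm {η : Config d} {x y : Site d} (hxy : x ≠ y)
    (hx : Unstable η x) (hy : Unstable η y) (i j : Instr d) :
    applyInstr (applyInstr η y j) x i = applyInstr (applyInstr η x i) y j := by
  obtain ⟨a, ha⟩ := hx
  obtain ⟨b, hb⟩ := hy
  have hnx := nbr_ne_self x
  have hny := nbr_ne_self y
  funext u
  cases i <;> cases j <;> simp only [applyInstr_sleep_apply, applyInstr_jump_apply] <;>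
    split_ifs <;> subst_vars <;> grind [arrive, depart]

variable (τ : Site d → ℕ → Instr d)

theorem Unstable.toppleSeq_of_not_mem {η : Config d} {x : Site d} (hx : Unstable η x)
    {γ : List (Site d)} (hxγ : x ∉ γ) (cnt : Site d → ℕ) :
    Unstable (toppleSeq τ γ η cnt).1 x := by
  induction γ generalizing η cnt with
  | nil => exact hx
  | cons y γ ih =>
    rw [List.mem_cons, not_or] at hxγ
    exact ih (hx.applyInstr_of_ne (Ne.symm hxγ.1) _) hxγ.2 _

theorem toppleSeq_swap {η : Config d} {x y : Site d} (hxy : x ≠ y)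
    (hx : Unstable η x) (hy : Unstable η y) (γ : List (Site d)) (cnt : Site d → ℕ) :
    toppleSeq τ (x :: y :: γ) η cnt = toppleSeq τ (y :: x :: γ) η cnt := by
  simp only [toppleSeq, Function.update_of_ne hxy, Function.update_of_ne hxy.symm,
    applyInstr_comm hxy hx hy, Function.update_comm hxy]

theorem legalSeq_swap {η : Config d} {x y : Site d} (hxy : x ≠ y)
    (hx : Unstable η x) (hy : Unstable η y) (γ : List (Site d)) (cnt : Site d → ℕ) :
    LegalSeq τ (x :: y :: γ) η cnt ↔ LegalSeq τ (y :: x :: γ) η cnt := by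
  simp only [LegalSeq, Function.update_of_ne hxy, Function.update_of_ne hxy.symm,
    applyInstr_comm hxy hx hy, Function.update_comm hxy, hx, hy,
    hx.applyInstr_of_ne hxy.symm, hy.applyInstr_of_ne hxy, true_and]

theorem LegalSeq.move_to_front {η : Config d} {x : Site d} (hx : Unstable η x)
    {γ : List (Site d)} (hxγ : x ∉ γ) {δ : List (Site d)} {cnt : Site d → ℕ}
    (h : LegalSeq τ (γ ++ x :: δ) η cnt) :
    LegalSeq τ (x :: (γ ++ δ)) η cnt ∧
      toppleSeq τ (x :: (γ ++ δ)) η cnt = toppleSeq τ (γ ++ x :: δ) η cnt := by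
  induction γ generalizing η cnt with
  | nil => exact ⟨h, rfl⟩
  | cons y γ ih =>
    rw [List.mem_cons, not_or] at hxγ
    obtain ⟨hy, hrest⟩ := h
    obtain ⟨hleg, htop⟩ := ih (hx.applyInstr_of_ne (Ne.symm hxγ.1) _) hxγ.2 hrest
    exact ⟨(legalSeq_swap τ hxγ.1 hx hy _ cnt).2 ⟨hy, hleg⟩,
      (toppleSeq_swap τ hxγ.1 hx hy _ cnt).trans htop⟩

theorem LegalSeq.count_le {β σ : List (Site d)} {η : Config d} {cnt : Site d → ℕ}
    (hβ : LegalSeq τ β η cnt) (hσ : LegalSeq τ σ η cnt)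
    (hstab : ∀ z ∈ β, ¬ Unstable (toppleSeq τ σ η cnt).1 z) (x : Site d) :
    β.count x ≤ σ.count x := by
  induction β generalizing σ η cnt with
  | nil => simp
  | cons p β ih =>
    obtain ⟨hp, hβ⟩ := hβ
    have hpσ : p ∈ σ := by
      by_contra hpσ
      exact hstab p List.mem_cons_self (hp.toppleSeq_of_not_mem τ hpσ cnt)
    obtain ⟨γ, δ, rfl, hpγ⟩ := List.eq_append_cons_of_mem hpσ
    obtain ⟨⟨-, hσ'⟩, htop⟩ := hσ.move_to_front τ hp hpγ
    have hle := ih hβ hσ' fun z hz => htop ▸ hstab z (List.mem_cons_of_mem _ hz)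
    rw [List.perm_middle.count_eq, List.count_cons, List.count_cons]
    omega

theorem mCount_le_of_stabilizesIn {η : Config d} {β σ : List (Site d)} {W : Finset (Site d)}
    (hβ : LegalSeq τ β η (fun _ => 0)) (hσ : LegalSeq τ σ η (fun _ => 0))
    (hβW : ∀ z ∈ β, z ∈ W) (hσW : StabilizesIn τ σ η W) (x : Site d) :
    mCount β x ≤ mCount σ x :=
  hβ.count_le τ hσ (fun z hz => hσW z (hβW z hz)) x

theorem exists_forall_mem_of_exhaustion {ι : Type*} {W : ℕ → Finset ι}
    (hmono : ∀ n, W n ⊆ W (n + 1)) (hexh : ∀ x, ∃ n, x ∈ W n) (l : List ι) :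
    ∃ n, ∀ z ∈ l, z ∈ W n := by
  classical
  have hdir : Directed (· ⊆ ·) fun n => (W n : Set ι) :=
    (monotone_nat_of_le_succ fun n => Finset.coe_subset.2 (hmono n)).directed_le
  obtain ⟨n, hn⟩ := hdir.exists_mem_subset_of_finset_subset_biUnion (s := l.toFinset)
    fun z _ => Set.mem_iUnion.2 (hexh z)
  exact ⟨n, fun z hz => hn (List.mem_toFinset.2 hz)⟩

theorem iSup_mCount_le_of_exhaustion {η : Config d} {A B : ℕ → List (Site d)}
    {W : ℕ → Finset (Site d)} (hmono : ∀ n, W n ⊆ W (n + 1)) (hexh : ∀ x, ∃ n, x ∈ W n)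
    (hA : ∀ n, LegalSeq τ (A n) η (fun _ => 0)) (hB : ∀ n, LegalSeq τ (B n) η (fun _ => 0))
    (hBW : ∀ n, StabilizesIn τ (B n) η (W n)) (x : Site d) :
    ⨆ n, (mCount (A n) x : ℕ∞) ≤ ⨆ n, (mCount (B n) x : ℕ∞) :=
  iSup_mono' fun n =>
    have ⟨m, hm⟩ := exists_forall_mem_of_exhaustion hmono hexh (A n)
    ⟨m, Nat.cast_le.2 (mCount_le_of_stabilizesIn τ (hA n) (hB m) hm (hBW m) x)⟩

end

theorem odometer_monotonicity_general {d : ℕ} (τ : Site d → ℕ → Instr d) (η : Config d)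
    -- monotonicity for a fixed pair V ⊆ V'
    (V V' : Finset (Site d)) (hVV' : V ⊆ V')
    (α α' : List (Site d))
    (hαV : ∀ x ∈ α, x ∈ V)
    (hα : LegalSeq τ α η (fun _ => 0)) (hα' : LegalSeq τ α' η (fun _ => 0))
    (hα'stab : StabilizesIn τ α' η V')
    -- two nondecreasing exhaustions of ℤ^d with legal stabilizing toppling sequences
    (Vseq Wseq : ℕ → Finset (Site d))
    (hVmono : ∀ n, Vseq n ⊆ Vseq (n + 1)) (hWmono : ∀ n, Wseq n ⊆ Wseq (n + 1))
    (hVexh : ∀ x : Site d, ∃ n, x ∈ Vseq n) (hWexh : ∀ x : Site d, ∃ n, x ∈ Wseq n)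
    (A B : ℕ → List (Site d))
    (hAleg : ∀ n, LegalSeq τ (A n) η (fun _ => 0))
    (hBleg : ∀ n, LegalSeq τ (B n) η (fun _ => 0))
    (hAstab : ∀ n, StabilizesIn τ (A n) η (Vseq n))
    (hBstab : ∀ n, StabilizesIn τ (B n) η (Wseq n)) :
    (∀ x : Site d, mCount α x ≤ mCount α' x)
    ∧
    (∀ x : Site d,
      (⨆ n : ℕ, (mCount (A n) x : ℕ∞)) = ⨆ n : ℕ, (mCount (B n) x : ℕ∞)) :=
  ⟨mCount_le_of_stabilizesIn τ hα hα' (fun z hz => hVV' (hαV z hz)) hα'stab,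
    fun x => le_antisymm
      (iSup_mCount_le_of_exhaustion τ hWmono hWexh hAleg hBleg hBstab x)
      (iSup_mCount_le_of_exhaustion τ hVmono hVexh hBleg hAleg hAstab x)⟩

/-- **Monotonicity of odometers.**  Fix a configuration `η` and an instruction sequence at
each site.  If `V ⊆ V'` are finite, `α` is a legal toppling sequence for `η` contained in
`V` stabilizing `η` in `V`, and `α'` is a legal toppling sequence for `η` contained in `V'`
stabilizing `η` in `V'`, then `m_α(x) ≤ m_{α'}(x)` for every `x` (so `m_V ≤ m_{V'}`
pointwise).  Moreover, for any two nondecreasing exhaustions `(V_n)`, `(W_n)` of `ℤ^d` with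
associated legal stabilizing sequences `(α_n)`, `(β_n)`, the (monotone) limits agree in
`(ℕ ∪ {∞})^{ℤ^d}`:  `⨆ n, m_{α_n}(x) = ⨆ n, m_{β_n}(x)`; i.e. the limit odometer
`m = lim_n m_{V_n}` exists and does not depend on the chosen exhaustion. -/
theorem odometer_monotonicity {d : ℕ} (τ : Site d → ℕ → Instr d) (η : Config d)
    -- monotonicity for a fixed pair V ⊆ V'
    (V V' : Finset (Site d)) (hVV' : V ⊆ V')
    (α α' : List (Site d))
    (hαV : ∀ x ∈ α, x ∈ V) (hα'V' : ∀ x ∈ α', x ∈ V')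
    (hα : LegalSeq τ α η (fun _ => 0)) (hα' : LegalSeq τ α' η (fun _ => 0))
    (hαstab : StabilizesIn τ α η V) (hα'stab : StabilizesIn τ α' η V')
    -- two nondecreasing exhaustions of ℤ^d with legal stabilizing toppling sequences
    (Vseq Wseq : ℕ → Finset (Site d))
    (hVmono : ∀ n, Vseq n ⊆ Vseq (n + 1)) (hWmono : ∀ n, Wseq n ⊆ Wseq (n + 1))
    (hVexh : ∀ x : Site d, ∃ n, x ∈ Vseq n) (hWexh : ∀ x : Site d, ∃ n, x ∈ Wseq n)
    (A B : ℕ → List (Site d))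
    (hAV : ∀ n, ∀ x ∈ A n, x ∈ Vseq n) (hBW : ∀ n, ∀ x ∈ B n, x ∈ Wseq n)
    (hAleg : ∀ n, LegalSeq τ (A n) η (fun _ => 0))
    (hBleg : ∀ n, LegalSeq τ (B n) η (fun _ => 0))
    (hAstab : ∀ n, StabilizesIn τ (A n) η (Vseq n))
    (hBstab : ∀ n, StabilizesIn τ (B n) η (Wseq n)) :
    (∀ x : Site d, mCount α x ≤ mCount α' x)
    ∧
    (∀ x : Site d,
      (⨆ n : ℕ, (mCount (A n) x : ℕ∞)) = ⨆ n : ℕ, (mCount (B n) x : ℕ∞)) :=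
  odometer_monotonicity_general τ η V V' hVV' α α' hαV hα hα' hα'stab Vseq Wseq hVmono hWmono hVexh
    hWexh A B hAleg hBleg hAstab hBstab
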